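/- Let γ > 0 and 0 < α ≤ 2, and let φ₂(x) = √(2γ) · x · (γ/π)^{1/4} e^{−γx²/2} with Fourier transform φ̂₂(k) = ∫_ℝ φ₂(x)e^{−ikx}dx. Then (1/(2π)) ∫_ℝ |k|^α |φ̂₂(k)|² dk + ∫_ℝ γ²x² φ₂(x)² dx = 3γ/2 + (2γ^{α/2}/√π) Γ((3+α)/2). -/

import Mathlib

open Real MeasureTheory

/-- The L²-normalized first excited state of the 1D harmonic oscillator `-d²/dx² + γ²x²`. -/
noncomputable def phi2 (γ : ℝ) (x : ℝ) : ℝ :=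
  Real.sqrt (2 * γ) * x * (γ / Real.pi) ^ ((1 : ℝ) / 4) * Real.exp (-γ * x ^ 2 / 2)

/-!
`φ₂` is `x` times a Gaussian, so integrating by parts against the Fourier transform of the
Gaussian shows that `φ̂₂(k)` is `k` times a Gaussian, and `|φ̂₂(k)|² ∝ k² e^{-k²/γ}`. Both energy
terms are then absolute Gaussian moments `∫ |x|^s e^{-bx²} = b^{-(s+1)/2} Γ((s+1)/2)`: with
`s = α + 2` for the kinetic term and `s = 4`, where `Γ(5/2) = 3√π/4`, for the potential term.
-/

open Complex

theorem MeasureTheory.Integrable.cexp_I_mul_mul {g : ℝ → ℂ} (hg : Integrable g) (t : ℝ) :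
    Integrable fun x : ℝ => cexp (I * t * x) * g x := by
  refine hg.bdd_mul (c := 1) (by fun_prop) (ae_of_all _ fun x => ?_)
  rw [show I * t * x = ((t * x : ℝ) : ℂ) * I by push_cast; ring, norm_exp_ofReal_mul_I]

theorem fourierIntegral_mul_gaussian {b : ℂ} (hb : 0 < b.re) (t : ℝ) :
    ∫ x : ℝ, cexp (I * t * x) * (x * cexp (-b * x ^ 2)) =
      I * t / (2 * b) * ((π / b) ^ (1 / 2 : ℂ) * cexp (-t ^ 2 / (4 * b))) := by
  have hb0 : b ≠ 0 := by contrapose! hb; simp [hb]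
  set g : ℝ → ℂ := fun x => cexp (I * t * x) * cexp (-b * x ^ 2) with hg_def
  have hg : Integrable g := (integrable_cexp_neg_mul_sq hb).cexp_I_mul_mul t
  have hxg := (integrable_mul_cexp_neg_mul_sq hb).cexp_I_mul_mul t
  have hderiv (x : ℝ) : HasDerivAt (fun x : ℝ => -(2 * b)⁻¹ * g x)
      (cexp (I * t * x) * (x * cexp (-b * x ^ 2)) - I * t / (2 * b) * g x) x := by
    have hlin : HasDerivAt (fun z : ℂ => I * t * z) (I * t) x := by
      simpa using (hasDerivAt_id (x : ℂ)).const_mul (I * t)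
    have hsq : HasDerivAt (fun z : ℂ => -b * z ^ 2) (-b * (2 * x)) x := by
      simpa using (hasDerivAt_pow 2 (x : ℂ)).const_mul (-b)
    convert ((hlin.cexp.mul hsq.cexp).const_mul (-(2 * b)⁻¹)).comp_ofReal using 1
    · rfl
    · simp only [hg_def]
      field_simp
      ring
  have hzero := integral_eq_zero_of_hasDerivAt_of_integrable hderiv
    (hxg.sub (hg.const_mul _)) (hg.const_mul _)
  rw [integral_sub hxg (hg.const_mul _), integral_const_mul, hg_def,
    fourierIntegral_gaussian hb] at hzero
  linear_combination hzero

theorem integral_abs_rpow_mul_exp_neg_mul_sq {b s : ℝ} (hb : 0 < b) (hs : -1 < s) :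
    ∫ x : ℝ, |x| ^ s * rexp (-b * x ^ 2) = b ^ (-(s + 1) / 2) * Real.Gamma ((s + 1) / 2) := by
  have h := integral_comp_abs (f := fun x => x ^ s * rexp (-b * x ^ (2 : ℝ)))
  simp only [Real.rpow_two, sq_abs] at h
  have hIoi := integral_rpow_mul_exp_neg_mul_rpow two_pos hs hb
  simp only [Real.rpow_two] at hIoi
  rw [h, hIoi]
  ring

theorem Real.rpow_natCast_add_one_half {x : ℝ} (hx : 0 ≤ x) (n : ℕ) :
    x ^ ((n : ℝ) + 1 / 2) = x ^ n * √x := by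
  rw [Real.rpow_add' hx (by positivity), Real.rpow_natCast, Real.sqrt_eq_rpow]

theorem phi2_coeff_sq {γ : ℝ} (hγ : 0 ≤ γ) :
    (√(2 * γ) * (γ / π) ^ (1 / 4 : ℝ)) ^ 2 = 2 * γ * √(γ / π) := by
  rw [mul_pow, Real.sq_sqrt (by positivity), ← Real.rpow_natCast, ← Real.rpow_mul (by positivity),
    Real.sqrt_eq_rpow]
  norm_num

theorem phi2_sq {γ : ℝ} (hγ : 0 ≤ γ) (x : ℝ) :
    phi2 γ x ^ 2 = 2 * γ * √(γ / π) * (x ^ 2 * rexp (-γ * x ^ 2)) := by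
  have hexp : rexp (-γ * x ^ 2 / 2) ^ 2 = rexp (-γ * x ^ 2) := by
    rw [← Real.exp_nat_mul]; ring_nf
  rw [phi2, ← phi2_coeff_sq hγ, ← hexp]
  ring

theorem fourier_phi2 {γ : ℝ} (hγ : 0 < γ) (k : ℝ) :
    ∫ x : ℝ, (phi2 γ x : ℂ) * cexp (-I * k * x) =
      ((√(2 * γ) * (γ / π) ^ (1 / 4 : ℝ) : ℝ) : ℂ) *
        (-I * k / γ * ((2 * π / γ : ℂ) ^ (1 / 2 : ℂ) * cexp (-k ^ 2 / (2 * γ)))) := by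
  have hγ' : (γ : ℂ) ≠ 0 := by exact_mod_cast hγ.ne'
  have hb : 0 < ((γ / 2 : ℝ) : ℂ).re := by simpa using hγ
  have hintegrand (x : ℝ) : (phi2 γ x : ℂ) * cexp (-I * k * x) =
      ((√(2 * γ) * (γ / π) ^ (1 / 4 : ℝ) : ℝ) : ℂ) *
        (cexp (I * (-k : ℝ) * x) * (x * cexp (-((γ / 2 : ℝ) : ℂ) * x ^ 2))) := by
    simp only [phi2]
    push_cast
    ring_nf
  simp_rw [hintegrand]
  rw [integral_const_mul, fourierIntegral_mul_gaussian hb]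
  push_cast
  rw [show (π : ℂ) / (γ / 2) = 2 * π / γ by field_simp]
  field_simp
  ring_nf

theorem norm_fourier_phi2_sq {γ : ℝ} (hγ : 0 < γ) (k : ℝ) :
    ‖∫ x : ℝ, (phi2 γ x : ℂ) * cexp (-I * k * x)‖ ^ 2 =
      4 * √π / (γ * √γ) * (k ^ 2 * rexp (-γ⁻¹ * k ^ 2)) := by
  have hsqrt : ‖(2 * π / γ : ℂ) ^ (1 / 2 : ℂ)‖ = √(2 * π / γ) := by
    rw [show (2 * π / γ : ℂ) = ((2 * π / γ : ℝ) : ℂ) by push_cast; rfl,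
      norm_cpow_eq_rpow_re_of_pos (by positivity), Real.sqrt_eq_rpow]
    norm_num
  have hexp : ‖cexp (-k ^ 2 / (2 * γ))‖ = rexp (-k ^ 2 / (2 * γ)) := by
    rw [show (-k ^ 2 / (2 * γ) : ℂ) = ((-k ^ 2 / (2 * γ) : ℝ) : ℂ) by push_cast; rfl,
      ← ofReal_exp, norm_real, Real.norm_of_nonneg (Real.exp_pos _).le]
  have hk : ‖-I * k / γ‖ = |k| / γ := by
    simp [abs_of_pos hγ]
  rw [fourier_phi2 hγ, norm_mul, norm_mul, norm_mul, hsqrt, hexp, hk, norm_real,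
    Real.norm_eq_abs, mul_pow, mul_pow, mul_pow, sq_abs, phi2_coeff_sq hγ.le, div_pow, sq_abs,
    Real.sq_sqrt (by positivity), ← Real.exp_nat_mul,
    show ((2 : ℕ) : ℝ) * (-k ^ 2 / (2 * γ)) = -γ⁻¹ * k ^ 2 by field_simp; ring,
    Real.sqrt_div hγ.le]
  field_simp
  rw [Real.sq_sqrt pi_pos.le, Real.sq_sqrt hγ.le]
  ring

theorem kinetic_energy_phi2 {γ α : ℝ} (hγ : 0 < γ) (hα : -3 < α) :
    1 / (2 * π) * ∫ k : ℝ, |k| ^ α * ‖∫ x : ℝ, (phi2 γ x : ℂ) * cexp (-I * k * x)‖ ^ 2 =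
      2 * γ ^ (α / 2) / √π * Real.Gamma ((3 + α) / 2) := by
  have hintegrand : (fun k : ℝ => |k| ^ α * ‖∫ x : ℝ, (phi2 γ x : ℂ) * cexp (-I * k * x)‖ ^ 2)
      =ᵐ[volume] fun k => 4 * √π / (γ * √γ) * (|k| ^ (α + 2) * rexp (-γ⁻¹ * k ^ 2)) := by
    -- only a.e.: at `k = 0` the sides differ when `α = -2`, since `0 ^ 0 = 1`
    filter_upwards [Measure.ae_ne volume 0] with k hk
    rw [norm_fourier_phi2_sq hγ, Real.rpow_add (abs_pos.2 hk), Real.rpow_two, sq_abs]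
    ring
  have hpow : (γ⁻¹) ^ (-(α + 2 + 1) / 2) = γ ^ (α / 2) * (γ * √γ) := by
    rw [Real.inv_rpow hγ.le, ← Real.rpow_neg hγ.le,
      show -(-(α + 2 + 1) / 2) = α / 2 + ((1 : ℕ) + 1 / 2) by push_cast; ring,
      Real.rpow_add hγ, Real.rpow_natCast_add_one_half hγ.le, pow_one]
  rw [integral_congr_ae hintegrand, integral_const_mul,
    integral_abs_rpow_mul_exp_neg_mul_sq (inv_pos.2 hγ) (by linarith), hpow,
    show (α + 2 + 1) / 2 = (3 + α) / 2 by ring]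
  field_simp
  rw [Real.sq_sqrt pi_pos.le]
  ring

theorem potential_energy_phi2 {γ : ℝ} (hγ : 0 < γ) :
    ∫ x : ℝ, γ ^ 2 * x ^ 2 * phi2 γ x ^ 2 = 3 * γ / 2 := by
  have hintegrand (x : ℝ) : γ ^ 2 * x ^ 2 * phi2 γ x ^ 2 =
      γ ^ 2 * (2 * γ * √(γ / π)) * (|x| ^ (4 : ℝ) * rexp (-γ * x ^ 2)) := by
    rw [phi2_sq hγ.le, show (4 : ℝ) = (4 : ℕ) by norm_num, Real.rpow_natCast,
      Even.pow_abs ⟨2, rfl⟩]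
    ring
  have hpow : γ ^ (-(4 + 1) / 2 : ℝ) = (γ ^ 2 * √γ)⁻¹ := by
    rw [show (-(4 + 1) / 2 : ℝ) = -((2 : ℕ) + 1 / 2) by norm_num, Real.rpow_neg hγ.le,
      Real.rpow_natCast_add_one_half hγ.le]
  have hGamma : Real.Gamma ((4 + 1) / 2) = 3 / 4 * √π := by
    rw [show (4 + 1) / 2 = ((2 : ℕ) : ℝ) + 1 / 2 by norm_num, Real.Gamma_nat_add_half]
    norm_num [Nat.doubleFactorial]
    ring
  simp_rw [hintegrand]
  rw [integral_const_mul, integral_abs_rpow_mul_exp_neg_mul_sq hγ (by norm_num), hpow, hGamma,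
    Real.sqrt_div hγ.le]
  field_simp
  ring

theorem energy_first_excited_state_harmonic_general (γ α : ℝ) (hγ : 0 < γ) (hα : 0 < α) :
    (1 / (2 * π)) * (∫ k : ℝ, |k| ^ α *
        (‖∫ x : ℝ, (phi2 γ x : ℂ) * Complex.exp (-Complex.I * k * x)‖) ^ 2)
      + ∫ x : ℝ, γ ^ 2 * x ^ 2 * (phi2 γ x) ^ 2
      = 3 * γ / 2 + 2 * γ ^ (α / 2) / Real.sqrt π * Real.Gamma ((3 + α) / 2) := by
  rw [kinetic_energy_phi2 hγ (by linarith), potential_energy_phi2 hγ]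
  ring

theorem energy_first_excited_state_harmonic (γ α : ℝ) (hγ : 0 < γ) (hα : 0 < α) (hα2 : α ≤ 2) :
    (1 / (2 * π)) * (∫ k : ℝ, |k| ^ α *
        (‖∫ x : ℝ, (phi2 γ x : ℂ) * Complex.exp (-Complex.I * k * x)‖) ^ 2)
      + ∫ x : ℝ, γ ^ 2 * x ^ 2 * (phi2 γ x) ^ 2
      = 3 * γ / 2 + 2 * γ ^ (α / 2) / Real.sqrt π * Real.Gamma ((3 + α) / 2) :=
  energy_first_excited_state_harmonic_general γ α hγ hα
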